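/- arXiv:2502.13813 — 2 statements merged into one kernel-verified Lean document; each statement's English description precedes it below -/
import Mathlib

section
/- For every n with n_ℓ > 0, every t ∈ {1,…,ℓ}, and every pair y¹, y² ∈ 𝒴^ℓ: P[Y^ℓ(1) = y¹, Y^ℓ(2) = y² | T = t] ≤ λ_max^t · P[Y^ℓ(1) = y¹, Y^ℓ(2) = y² | T = 0]. Consequently, if moreover λ_max^t < n_ℓ, then P_T(t)·P[Y^ℓ(1)=y¹, Y^ℓ(2)=y² | T=t] < P_T(0)·P[Y^ℓ(1)=y¹, Y^ℓ(2)=y² | T=0] for every (y¹,y²) with P[Y^ℓ(1)=y¹, Y^ℓ(2)=y² | T=0] > 0; in particular any maximum-a-posteriori detector never outputs such a value t. -/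
open Filter Real

section

variable {𝒳 𝒴 : Type*} [Fintype 𝒳] [Fintype 𝒴] [Nonempty 𝒳] [Nonempty 𝒴]

/-- `p` is a probability mass function on a finite alphabet. -/
def IsPmf {α : Type*} [Fintype α] (p : α → ℝ) : Prop := (∀ a, 0 ≤ p a) ∧ ∑ a, p a = 1

/-- The output marginal `P_Y` of the source `PX` through the channel `W`. -/
noncomputable def margY (PX : 𝒳 → ℝ) (W : 𝒳 → 𝒴 → ℝ) (y : 𝒴) : ℝ := ∑ x, PX x * W x y

/-- The joint pmf `P_{Y Ỹ}` of two independent noisy observations of the same source symbol. -/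
noncomputable def jointYY (PX : 𝒳 → ℝ) (W : 𝒳 → 𝒴 → ℝ) (y y2 : 𝒴) : ℝ :=
  ∑ x, PX x * W x y * W x y2

/-- The likelihood ratio `λ(y, y2)`. -/
noncomputable def lam (PX : 𝒳 → ℝ) (W : 𝒳 → 𝒴 → ℝ) (y y2 : 𝒴) : ℝ :=
  if 0 < margY PX W y * margY PX W y2 then
    jointYY PX W y y2 / (margY PX W y * margY PX W y2) else 0

/-- The mutual information `I(Y; Ỹ)`. -/
noncomputable def mutInf (PX : 𝒳 → ℝ) (W : 𝒳 → 𝒴 → ℝ) : ℝ :=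
  ∑ y : 𝒴, ∑ y2 : 𝒴,
    if 0 < jointYY PX W y y2 then jointYY PX W y y2 * Real.log (lam PX W y y2) else 0

/-- Safe indexing into a tuple. -/
noncomputable def idx {α : Type*} [Nonempty α] {m : ℕ} (x : Fin m → α) (i : ℕ) : α :=
  if h : i < m then x ⟨i, h⟩ else Classical.arbitrary α

/-- Conditional law of the pair of reads given a positive overlap `s`: the reads are noisy
observations (through `W`) of two length-`L` windows of an i.i.d. `PX`-sequence whose starting
points are `L - s` apart. -/
noncomputable def condPos (PX : 𝒳 → ℝ) (W : 𝒳 → 𝒴 → ℝ) (L s : ℕ)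
    (y₁ y₂ : Fin L → 𝒴) : ℝ :=
  ∑ x : Fin (2 * L) → 𝒳,
    (∏ j, PX (x j)) *
      ((∏ i : Fin L, W (idx x (i : ℕ)) (y₁ i)) *
        (∏ i : Fin L, W (idx x (L - s + (i : ℕ))) (y₂ i)))

/-- Conditional law of the pair of reads given the overlap `t`. -/
noncomputable def condLik (PX : 𝒳 → ℝ) (W : 𝒳 → 𝒴 → ℝ) (L : ℕ) (t : ℤ)
    (y₁ y₂ : Fin L → 𝒴) : ℝ :=
  if 1 ≤ t ∧ t ≤ (L : ℤ) then condPos PX W L t.toNat y₁ y₂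
  else if 1 - (L : ℤ) ≤ t ∧ t ≤ -1 then condPos PX W L (-t).toNat y₂ y₁
  else if t = 0 then (∏ i, margY PX W (y₁ i)) * (∏ i, margY PX W (y₂ i))
  else 0

/-- The read length `ℓ(n) = ⌈β log n⌉`. -/
noncomputable def ell (β : ℝ) (n : ℕ) : ℕ := ⌈β * Real.log n⌉₊

/-- The prior pmf of the overlap `T`. -/
noncomputable def priorT (n L : ℕ) (t : ℤ) : ℝ :=
  if t = 0 then ((n : ℝ) - (2 * (L : ℝ) - 1)) / n
  else if t ∈ Finset.Icc (1 - (L : ℤ)) ((L : ℤ)) then (n : ℝ)⁻¹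
  else 0

/-- Bayesian error probability of the detector `That` in the noisy setting. -/
noncomputable def errProbN (PX : 𝒳 → ℝ) (W : 𝒳 → 𝒴 → ℝ) (n L : ℕ)
    (That : (Fin L → 𝒴) → (Fin L → 𝒴) → ℤ) : ℝ :=
  ∑ t ∈ Finset.Icc (1 - (L : ℤ)) ((L : ℤ)), ∑ y₁ : Fin L → 𝒴, ∑ y₂ : Fin L → 𝒴,
    if That y₁ y₂ ≠ t then priorT n L t * condLik PX W L t y₁ y₂ else 0

/-- Minimal Bayesian error probability over all detectors with values in `𝒯`. -/
noncomputable def PstarN (PX : 𝒳 → ℝ) (W : 𝒳 → 𝒴 → ℝ) (β : ℝ) (n : ℕ) : ℝ :=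
  sInf {e : ℝ | ∃ That : (Fin (ell β n) → 𝒴) → (Fin (ell β n) → 𝒴) → ℤ,
    (∀ y₁ y₂, That y₁ y₂ ∈ Finset.Icc (1 - (ell β n : ℤ)) ((ell β n : ℤ))) ∧
    e = errProbN PX W n (ell β n) That}

/-- The maximal likelihood ratio `λ_max`. -/
noncomputable def lamMax (PX : 𝒳 → ℝ) (W : 𝒳 → 𝒴 → ℝ) : ℝ :=
  ⨆ p : 𝒴 × 𝒴, lam PX W p.1 p.2

section AuxProofs

variable {𝒳 𝒴 : Type*} [Fintype 𝒳] [Fintype 𝒴] [Nonempty 𝒳] [Nonempty 𝒴]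

lemma idx_eq {α : Type*} [Nonempty α] {m : ℕ} (x : Fin m → α) (j : Fin m) :
    idx x (j : ℕ) = x j := by
  simp [idx, j.isLt]

lemma margY_nonneg {PX : 𝒳 → ℝ} {W : 𝒳 → 𝒴 → ℝ} (hPX : IsPmf PX) (hW : ∀ x, IsPmf (W x))
    (y : 𝒴) : 0 ≤ margY PX W y :=
  Finset.sum_nonneg fun x _ => mul_nonneg (hPX.1 x) ((hW x).1 y)

lemma lam_le_lamMax (PX : 𝒳 → ℝ) (W : 𝒳 → 𝒴 → ℝ) (y y2 : 𝒴) :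
    lam PX W y y2 ≤ lamMax PX W := by
  unfold lamMax
  exact le_ciSup (f := fun p : 𝒴 × 𝒴 => lam PX W p.1 p.2)
    (Set.Finite.bddAbove (Set.finite_range _)) ((y, y2) : 𝒴 × 𝒴)

lemma jointYY_le {PX : 𝒳 → ℝ} {W : 𝒳 → 𝒴 → ℝ} (hPX : IsPmf PX) (hW : ∀ x, IsPmf (W x))
    (y y2 : 𝒴) :
    jointYY PX W y y2 ≤ lamMax PX W * (margY PX W y * margY PX W y2) := by
  by_cases h : 0 < margY PX W y * margY PX W y2
  · have hl : lam PX W y y2 = jointYY PX W y y2 / (margY PX W y * margY PX W y2) := by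
      rw [lam, if_pos h]
    have := mul_le_mul_of_nonneg_right (lam_le_lamMax PX W y y2) h.le
    rw [hl, div_mul_cancel₀ _ (ne_of_gt h)] at this
    linarith
  · have hm : margY PX W y * margY PX W y2 = 0 :=
      le_antisymm (not_lt.mp h)
        (mul_nonneg (margY_nonneg hPX hW y) (margY_nonneg hPX hW y2))
    have hj : jointYY PX W y y2 = 0 := by
      rcases mul_eq_zero.mp hm with h0 | h0
      · have hz : ∀ x ∈ (Finset.univ : Finset 𝒳), PX x * W x y = 0 :=
          (Finset.sum_eq_zero_iff_of_nonneg
            (fun x _ => mul_nonneg (hPX.1 x) ((hW x).1 y))).mp h0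
        exact Finset.sum_eq_zero fun x _ => by
          rw [hz x (Finset.mem_univ x), zero_mul]
      · have hz : ∀ x ∈ (Finset.univ : Finset 𝒳), PX x * W x y2 = 0 :=
          (Finset.sum_eq_zero_iff_of_nonneg
            (fun x _ => mul_nonneg (hPX.1 x) ((hW x).1 y2))).mp h0
        exact Finset.sum_eq_zero fun x _ => by
          have := hz x (Finset.mem_univ x)
          rcases mul_eq_zero.mp this with h1 | h1 <;> simp [h1]
    rw [hj, hm, mul_zero]

/-- Per-coordinate factor for the first read. -/
noncomputable def uAux (W : 𝒳 → 𝒴 → ℝ) (L : ℕ) (y₁ : Fin L → 𝒴) (k : ℕ) (a : 𝒳) : ℝ :=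
  if k < L then W a (idx y₁ k) else 1

/-- Per-coordinate factor for the second read. -/
noncomputable def vAux (W : 𝒳 → 𝒴 → ℝ) (L s : ℕ) (y₂ : Fin L → 𝒴) (k : ℕ) (a : 𝒳) : ℝ :=
  if L - s ≤ k ∧ k < 2 * L - s then W a (idx y₂ (k - (L - s))) else 1

noncomputable def cAux (PX : 𝒳 → ℝ) (W : 𝒳 → 𝒴 → ℝ) (L s k : ℕ) : ℝ :=
  if L - s ≤ k ∧ k < L then lamMax PX W else 1

noncomputable def m1Aux (PX : 𝒳 → ℝ) (W : 𝒳 → 𝒴 → ℝ) (L : ℕ) (y₁ : Fin L → 𝒴) (k : ℕ) : ℝ :=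
  if k < L then margY PX W (idx y₁ k) else 1

noncomputable def m2Aux (PX : 𝒳 → ℝ) (W : 𝒳 → 𝒴 → ℝ) (L s : ℕ) (y₂ : Fin L → 𝒴) (k : ℕ) : ℝ :=
  if L - s ≤ k ∧ k < 2 * L - s then margY PX W (idx y₂ (k - (L - s))) else 1

lemma condPos_eq_prod (PX : 𝒳 → ℝ) (W : 𝒳 → 𝒴 → ℝ) (L s : ℕ) (hs : s ≤ L)
    (y₁ y₂ : Fin L → 𝒴) :
    condPos PX W L s y₁ y₂ =
      ∏ k ∈ Finset.range (2 * L), ∑ a, PX a * uAux W L y₁ k a * vAux W L s y₂ k a := by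
  have hx : ∀ x : Fin (2 * L) → 𝒳,
      (∏ j, PX (x j)) *
        ((∏ i : Fin L, W (idx x (i : ℕ)) (y₁ i)) *
          (∏ i : Fin L, W (idx x (L - s + (i : ℕ))) (y₂ i))) =
      ∏ j : Fin (2 * L), (PX (x j) * uAux W L y₁ (j : ℕ) (x j) * vAux W L s y₂ (j : ℕ) (x j)) := by
    intro x
    have hA : ∏ j : Fin (2 * L), uAux W L y₁ (j : ℕ) (x j)
        = ∏ i : Fin L, W (idx x (i : ℕ)) (y₁ i) := by
      calc ∏ j : Fin (2 * L), uAux W L y₁ (j : ℕ) (x j)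
          = ∏ k ∈ Finset.range (2 * L), uAux W L y₁ k (idx x k) := by
            rw [← Fin.prod_univ_eq_prod_range (fun k => uAux W L y₁ k (idx x k)) (2 * L)]
            exact Finset.prod_congr rfl fun j _ => by rw [idx_eq]
        _ = ∏ k ∈ Finset.range L, uAux W L y₁ k (idx x k) := by
            refine (Finset.prod_subset (Finset.range_subset_range.mpr (by omega)) ?_).symm
            intro k _ hk
            rw [Finset.mem_range] at hk
            rw [uAux, if_neg hk]
        _ = ∏ i : Fin L, uAux W L y₁ (i : ℕ) (idx x (i : ℕ)) :=
            (Fin.prod_univ_eq_prod_range _ _).symm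
        _ = ∏ i : Fin L, W (idx x (i : ℕ)) (y₁ i) :=
            Finset.prod_congr rfl fun i _ => by rw [uAux, if_pos i.isLt, idx_eq]
    have hB : ∏ j : Fin (2 * L), vAux W L s y₂ (j : ℕ) (x j)
        = ∏ i : Fin L, W (idx x (L - s + (i : ℕ))) (y₂ i) := by
      calc ∏ j : Fin (2 * L), vAux W L s y₂ (j : ℕ) (x j)
          = ∏ k ∈ Finset.range (2 * L), vAux W L s y₂ k (idx x k) := by
            rw [← Fin.prod_univ_eq_prod_range (fun k => vAux W L s y₂ k (idx x k)) (2 * L)]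
            exact Finset.prod_congr rfl fun j _ => by rw [idx_eq]
        _ = ∏ k ∈ Finset.Ico (L - s) (2 * L - s), vAux W L s y₂ k (idx x k) := by
            refine (Finset.prod_subset ?_ ?_).symm
            · intro k hk
              rw [Finset.mem_Ico] at hk
              rw [Finset.mem_range]
              omega
            · intro k _ hk
              rw [Finset.mem_Ico] at hk
              rw [vAux, if_neg hk]
        _ = ∏ k ∈ Finset.Ico (L - s) (2 * L - s), W (idx x k) (idx y₂ (k - (L - s))) := by
            refine Finset.prod_congr rfl fun k hk => ?_
            rw [Finset.mem_Ico] at hk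
            rw [vAux, if_pos hk]
        _ = ∏ j ∈ Finset.range (2 * L - s - (L - s)),
              W (idx x (L - s + j)) (idx y₂ (L - s + j - (L - s))) :=
            Finset.prod_Ico_eq_prod_range _ _ _
        _ = ∏ j ∈ Finset.range L, W (idx x (L - s + j)) (idx y₂ j) := by
            rw [show 2 * L - s - (L - s) = L by omega]
            exact Finset.prod_congr rfl fun j _ => by rw [Nat.add_sub_cancel_left]
        _ = ∏ i : Fin L, W (idx x (L - s + (i : ℕ))) (idx y₂ (i : ℕ)) :=
            (Fin.prod_univ_eq_prod_range _ _).symm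
        _ = ∏ i : Fin L, W (idx x (L - s + (i : ℕ))) (y₂ i) :=
            Finset.prod_congr rfl fun i _ => by rw [idx_eq]
    rw [Finset.prod_mul_distrib, Finset.prod_mul_distrib, hA, hB]
    ring
  rw [condPos]
  simp_rw [hx]
  rw [← Fintype.prod_sum
      (f := fun (j : Fin (2 * L)) a => PX a * uAux W L y₁ (j : ℕ) a * vAux W L s y₂ (j : ℕ) a)]
  exact Fin.prod_univ_eq_prod_range
    (fun k => ∑ a, PX a * uAux W L y₁ k a * vAux W L s y₂ k a) (2 * L)

lemma sum_fac_nonneg {PX : 𝒳 → ℝ} {W : 𝒳 → 𝒴 → ℝ} (hPX : IsPmf PX) (hW : ∀ x, IsPmf (W x))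
    (L s : ℕ) (y₁ y₂ : Fin L → 𝒴) (k : ℕ) :
    0 ≤ ∑ a, PX a * uAux W L y₁ k a * vAux W L s y₂ k a := by
  refine Finset.sum_nonneg fun a _ => ?_
  have hu : 0 ≤ uAux W L y₁ k a := by
    unfold uAux; split
    · exact (hW a).1 _
    · exact zero_le_one
  have hv : 0 ≤ vAux W L s y₂ k a := by
    unfold vAux; split
    · exact (hW a).1 _
    · exact zero_le_one
  exact mul_nonneg (mul_nonneg (hPX.1 a) hu) hv

lemma sum_fac_le {PX : 𝒳 → ℝ} {W : 𝒳 → 𝒴 → ℝ} (hPX : IsPmf PX) (hW : ∀ x, IsPmf (W x))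
    (L s : ℕ) (hs : s ≤ L) (y₁ y₂ : Fin L → 𝒴) (k : ℕ) :
    ∑ a, PX a * uAux W L y₁ k a * vAux W L s y₂ k a ≤
      cAux PX W L s k * (m1Aux PX W L y₁ k * m2Aux PX W L s y₂ k) := by
  by_cases h1 : k < L
  · by_cases h2 : L - s ≤ k
    · have h3 : k < 2 * L - s := by omega
      simp only [uAux, vAux, cAux, m1Aux, m2Aux, h1, h2, h3, and_self, if_true, true_and]
      exact jointYY_le hPX hW (idx y₁ k) (idx y₂ (k - (L - s)))
    · simp only [uAux, vAux, cAux, m1Aux, m2Aux, h1, h2, if_true, false_and, and_false,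
        if_false, mul_one, one_mul]
      exact le_of_eq rfl
  · by_cases h3 : L - s ≤ k ∧ k < 2 * L - s
    · simp only [uAux, vAux, cAux, m1Aux, m2Aux, h1, h3, h3.1, h3.2, and_self, if_true,
        if_false, and_true, true_and, false_and, and_false, mul_one, one_mul]
      exact le_of_eq rfl
    · simp only [uAux, vAux, cAux, m1Aux, m2Aux, h1, h3, if_false, false_and, and_false,
        mul_one, one_mul]
      exact le_of_eq hPX.2

lemma condPos_le {PX : 𝒳 → ℝ} {W : 𝒳 → 𝒴 → ℝ} (hPX : IsPmf PX) (hW : ∀ x, IsPmf (W x))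
    (L s : ℕ) (hs : s ≤ L) (y₁ y₂ : Fin L → 𝒴) :
    condPos PX W L s y₁ y₂ ≤
      lamMax PX W ^ s * ((∏ i, margY PX W (y₁ i)) * ∏ i, margY PX W (y₂ i)) := by
  rw [condPos_eq_prod PX W L s hs]
  have key : ∏ k ∈ Finset.range (2 * L), (∑ a, PX a * uAux W L y₁ k a * vAux W L s y₂ k a) ≤
      ∏ k ∈ Finset.range (2 * L),
        cAux PX W L s k * (m1Aux PX W L y₁ k * m2Aux PX W L s y₂ k) :=
    Finset.prod_le_prod (fun k _ => sum_fac_nonneg hPX hW L s y₁ y₂ k)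
      (fun k _ => sum_fac_le hPX hW L s hs y₁ y₂ k)
  refine key.trans_eq ?_
  rw [Finset.prod_mul_distrib, Finset.prod_mul_distrib]
  have hc : ∏ k ∈ Finset.range (2 * L), cAux PX W L s k = lamMax PX W ^ s := by
    calc ∏ k ∈ Finset.range (2 * L), cAux PX W L s k
        = ∏ k ∈ Finset.Ico (L - s) L, cAux PX W L s k := by
          refine (Finset.prod_subset ?_ ?_).symm
          · intro k hk
            rw [Finset.mem_Ico] at hk
            rw [Finset.mem_range]
            omega
          · intro k _ hk
            rw [Finset.mem_Ico] at hk
            rw [cAux, if_neg hk]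
      _ = ∏ _k ∈ Finset.Ico (L - s) L, lamMax PX W := by
          refine Finset.prod_congr rfl fun k hk => ?_
          rw [Finset.mem_Ico] at hk
          rw [cAux, if_pos hk]
      _ = lamMax PX W ^ (L - (L - s)) := by rw [Finset.prod_const, Nat.card_Ico]
      _ = lamMax PX W ^ s := by rw [show L - (L - s) = s by omega]
  have hm1 : ∏ k ∈ Finset.range (2 * L), m1Aux PX W L y₁ k = ∏ i, margY PX W (y₁ i) := by
    calc ∏ k ∈ Finset.range (2 * L), m1Aux PX W L y₁ k
        = ∏ k ∈ Finset.range L, m1Aux PX W L y₁ k := by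
          refine (Finset.prod_subset (Finset.range_subset_range.mpr (by omega)) ?_).symm
          intro k _ hk
          rw [Finset.mem_range] at hk
          rw [m1Aux, if_neg hk]
      _ = ∏ i : Fin L, m1Aux PX W L y₁ (i : ℕ) := (Fin.prod_univ_eq_prod_range _ _).symm
      _ = ∏ i, margY PX W (y₁ i) :=
          Finset.prod_congr rfl fun i _ => by rw [m1Aux, if_pos i.isLt, idx_eq]
  have hm2 : ∏ k ∈ Finset.range (2 * L), m2Aux PX W L s y₂ k = ∏ i, margY PX W (y₂ i) := by
    calc ∏ k ∈ Finset.range (2 * L), m2Aux PX W L s y₂ k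
        = ∏ k ∈ Finset.Ico (L - s) (2 * L - s), m2Aux PX W L s y₂ k := by
          refine (Finset.prod_subset ?_ ?_).symm
          · intro k hk
            rw [Finset.mem_Ico] at hk
            rw [Finset.mem_range]
            omega
          · intro k _ hk
            rw [Finset.mem_Ico] at hk
            rw [m2Aux, if_neg hk]
      _ = ∏ k ∈ Finset.Ico (L - s) (2 * L - s), margY PX W (idx y₂ (k - (L - s))) := by
          refine Finset.prod_congr rfl fun k hk => ?_
          rw [Finset.mem_Ico] at hk
          rw [m2Aux, if_pos hk]
      _ = ∏ j ∈ Finset.range (2 * L - s - (L - s)), margY PX W (idx y₂ (L - s + j - (L - s))) :=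
          Finset.prod_Ico_eq_prod_range _ _ _
      _ = ∏ j ∈ Finset.range L, margY PX W (idx y₂ j) := by
          rw [show 2 * L - s - (L - s) = L by omega]
          exact Finset.prod_congr rfl fun j _ => by rw [Nat.add_sub_cancel_left]
      _ = ∏ i : Fin L, margY PX W (idx y₂ (i : ℕ)) := (Fin.prod_univ_eq_prod_range _ _).symm
      _ = ∏ i, margY PX W (y₂ i) := Finset.prod_congr rfl fun i _ => by rw [idx_eq]
  rw [hc, hm1, hm2]

end AuxProofs

/-- Short overlaps are never detected by a MAP detector: the likelihood of
an overlap `t` is at most `λ_max^t` times the likelihood of no overlap, and if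
`λ_max^t < n_ℓ` then the posterior of `t` is strictly smaller than that of `0`. -/
theorem short_overlaps_never_detected
    (PX : 𝒳 → ℝ) (W : 𝒳 → 𝒴 → ℝ)
    (hPX : IsPmf PX) (hW : ∀ x, IsPmf (W x))
    (β : ℝ) (hβ : 0 < β)
    (n : ℕ) (hn : 2 ≤ n) (hnl : 0 < (n : ℝ) - (2 * (ell β n : ℝ) - 1))
    (t : ℕ) (ht : 1 ≤ t) (ht' : t ≤ ell β n) :
    (∀ y₁ y₂ : Fin (ell β n) → 𝒴,
        condLik PX W (ell β n) (t : ℤ) y₁ y₂ ≤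
          lamMax PX W ^ t * condLik PX W (ell β n) 0 y₁ y₂) ∧
      (lamMax PX W ^ t < (n : ℝ) - (2 * (ell β n : ℝ) - 1) →
        (∀ y₁ y₂ : Fin (ell β n) → 𝒴, 0 < condLik PX W (ell β n) 0 y₁ y₂ →
            priorT n (ell β n) (t : ℤ) * condLik PX W (ell β n) (t : ℤ) y₁ y₂ <
              priorT n (ell β n) 0 * condLik PX W (ell β n) 0 y₁ y₂) ∧
          ∀ That : (Fin (ell β n) → 𝒴) → (Fin (ell β n) → 𝒴) → ℤ,
            (∀ y₁ y₂, That y₁ y₂ ∈ Finset.Icc (1 - (ell β n : ℤ)) ((ell β n : ℤ))) →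
            (∀ y₁ y₂, ∀ t' ∈ Finset.Icc (1 - (ell β n : ℤ)) ((ell β n : ℤ)),
              priorT n (ell β n) t' * condLik PX W (ell β n) t' y₁ y₂ ≤
                priorT n (ell β n) (That y₁ y₂) *
                  condLik PX W (ell β n) (That y₁ y₂) y₁ y₂) →
            ∀ y₁ y₂ : Fin (ell β n) → 𝒴, 0 < condLik PX W (ell β n) 0 y₁ y₂ →
              That y₁ y₂ ≠ (t : ℤ)) := by
  set L := ell β n with hLdef
  have hL1 : 1 ≤ L := le_trans ht ht'
  have hckt : ∀ y₁ y₂ : Fin L → 𝒴,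
      condLik PX W L (t : ℤ) y₁ y₂ = condPos PX W L t y₁ y₂ := by
    intro y₁ y₂
    rw [condLik, if_pos ⟨by exact_mod_cast ht, by exact_mod_cast ht'⟩, Int.toNat_natCast]
  have hck0 : ∀ y₁ y₂ : Fin L → 𝒴,
      condLik PX W L 0 y₁ y₂ =
        (∏ i, margY PX W (y₁ i)) * ∏ i, margY PX W (y₂ i) := by
    intro y₁ y₂
    rw [condLik, if_neg (by omega), if_neg (by omega), if_pos rfl]
  have main : ∀ y₁ y₂ : Fin L → 𝒴,
      condLik PX W L (t : ℤ) y₁ y₂ ≤ lamMax PX W ^ t * condLik PX W L 0 y₁ y₂ := by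
    intro y₁ y₂
    rw [hckt, hck0]
    exact condPos_le hPX hW L t ht' y₁ y₂
  refine ⟨main, fun hlt => ?_⟩
  have hnpos : (0 : ℝ) < n := by
    have : (2 : ℝ) ≤ n := by exact_mod_cast hn
    linarith
  have hpt : priorT n L (t : ℤ) = (n : ℝ)⁻¹ := by
    rw [priorT, if_neg (by omega), if_pos (Finset.mem_Icc.mpr ⟨by omega, by omega⟩)]
  have hp0 : priorT n L 0 = ((n : ℝ) - (2 * (L : ℝ) - 1)) / n := by
    rw [priorT, if_pos rfl]
  have strict : ∀ y₁ y₂ : Fin L → 𝒴, 0 < condLik PX W L 0 y₁ y₂ →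
      priorT n L (t : ℤ) * condLik PX W L (t : ℤ) y₁ y₂ <
        priorT n L 0 * condLik PX W L 0 y₁ y₂ := by
    intro y₁ y₂ h0
    rw [hpt, hp0]
    calc (n : ℝ)⁻¹ * condLik PX W L (t : ℤ) y₁ y₂
        ≤ (n : ℝ)⁻¹ * (lamMax PX W ^ t * condLik PX W L 0 y₁ y₂) :=
          mul_le_mul_of_nonneg_left (main y₁ y₂) (by positivity)
      _ < (n : ℝ)⁻¹ * (((n : ℝ) - (2 * (L : ℝ) - 1)) * condLik PX W L 0 y₁ y₂) := by
          apply mul_lt_mul_of_pos_left _ (by positivity)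
          exact mul_lt_mul_of_pos_right hlt h0
      _ = ((n : ℝ) - (2 * (L : ℝ) - 1)) / n * condLik PX W L 0 y₁ y₂ := by
          rw [div_eq_mul_inv]; ring
  refine ⟨strict, fun That hrange hopt y₁ y₂ h0 heq => ?_⟩
  have h00 : (0 : ℤ) ∈ Finset.Icc (1 - (L : ℤ)) (L : ℤ) :=
    Finset.mem_Icc.mpr ⟨by omega, by omega⟩
  have hle := hopt y₁ y₂ 0 h00
  rw [heq] at hle
  exact absurd hle (not_le.mpr (strict y₁ y₂ h0))

end
end

section
/- Let μ be a stationary ergodic measure on 𝒳^ℤ whose entropy rate satisfies 0 < ℋ₁ < ∞ and such that for every α ∈ (1,2] the order-α Rényi entropy rate ℋ_α exists and ℋ_α → ℋ₁ as α ↓ 1. Fix β > 0. Then for every η > 0: lim_{n→∞} sup{ ∑_{x∈𝒳^t} P_{X₁^t}(x) · 1[ P_{X₁^t}(x) ≥ 1/n_ℓ ] : t ∈ ℕ, t > (1+η)(log n)/ℋ₁ } = 0. -/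
/-!
For every `α > 1` and `δ > 0`, Markov's inequality applied to `P^(α-1)` gives
`∑ₓ P x · 1[P x ≥ δ] ≤ δ^(1-α) ∑ₓ P x^α = δ^(1-α) exp (-(α-1) H_α(P))`.
Take `δ = 1/n_ℓ ≥ 1/n`, some `1 < γ < 1 + η`, and `α` so close to `1` that `ℋ_α > γ ℋ₁/(1+η)`;
then for `t > (1+η) log n / ℋ₁` large, `H_α(P_{X₁^t}) ≥ γ log n`, and the sum is at most
`n^(α-1) n^(-(α-1)γ) = n^(-(α-1)(γ-1))`, uniformly in `t`.
-/

open MeasureTheory Filter Real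

section

variable {𝒳 : Type*} [Fintype 𝒳] [MeasurableSpace 𝒳] [MeasurableSingletonClass 𝒳]

/-- The left shift on two-sided sequences. -/
def shift {𝒳 : Type*} : (ℤ → 𝒳) → (ℤ → 𝒳) := fun ω i => ω (i + 1)

/-- The pmf of the block `(X_a, …, X_{a+t-1})` under `μ`. -/
noncomputable def blockPmf (μ : Measure (ℤ → 𝒳)) (a : ℤ) (t : ℕ) (x : Fin t → 𝒳) : ℝ :=
  (μ {ω | ∀ i : Fin t, ω (a + ((i : ℕ) : ℤ)) = x i}).toReal

/-- Shannon entropy of the block `(X_1, …, X_t)`. -/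
noncomputable def shannonH (μ : Measure (ℤ → 𝒳)) (t : ℕ) : ℝ :=
  ∑ x : Fin t → 𝒳, Real.negMulLog (blockPmf μ 1 t x)

/-- Order-`α` Rényi entropy of the block `(X_1, …, X_t)`. -/
noncomputable def renyiH (μ : Measure (ℤ → 𝒳)) (α : ℝ) (t : ℕ) : ℝ :=
  (1 - α)⁻¹ * Real.log (∑ x : Fin t → 𝒳, blockPmf μ 1 t x ^ α)

/-- `max_{x : P(x) > 0} log (1 / P_{X_1^t}(x))`. -/
noncomputable def maxInfo (μ : Measure (ℤ → 𝒳)) (t : ℕ) : ℝ :=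
  sSup {r : ℝ | ∃ x : Fin t → 𝒳, 0 < blockPmf μ 1 t x ∧ r = Real.log (1 / blockPmf μ 1 t x)}

/-- The σ-algebra generated by the coordinates with index `≤ i`. -/
def pastSigma (𝒳 : Type*) [MeasurableSpace 𝒳] (i : ℤ) : MeasurableSpace (ℤ → 𝒳) :=
  MeasurableSpace.comap (fun ω (j : {j : ℤ // j ≤ i}) => ω (j : ℤ)) inferInstance

/-- The σ-algebra generated by the coordinates with index `≥ i`. -/
def futureSigma (𝒳 : Type*) [MeasurableSpace 𝒳] (i : ℤ) : MeasurableSpace (ℤ → 𝒳) :=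
  MeasurableSpace.comap (fun ω (j : {j : ℤ // i ≤ j}) => ω (j : ℤ)) inferInstance

/-- Strong mixing coefficient `d(s)`. -/
noncomputable def mixCoef (μ : Measure (ℤ → 𝒳)) (s : ℕ) : ℝ :=
  sSup {r : ℝ | ∃ (i : ℤ) (E F : Set (ℤ → 𝒳)),
    MeasurableSet[pastSigma 𝒳 i] E ∧ MeasurableSet[futureSigma 𝒳 (i + (s : ℤ))] F ∧
    μ E ≠ 0 ∧ r = |(μ (F ∩ E)).toReal / (μ E).toReal - (μ F).toReal|}

/-- The window from which `I(2)` is drawn uniformly, given `I(1) = i₁`. -/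
noncomputable def window (n L : ℕ) (i₁ : ℤ) : Finset ℤ :=
  if i₁ ≤ (L : ℤ) - 1 then Finset.Icc (i₁ - (L : ℤ) + 1) (i₁ + (n : ℤ) - (L : ℤ))
  else if i₁ ≤ (n : ℤ) - (L : ℤ) + 1 then Finset.Icc 1 (n : ℤ)
  else Finset.Icc (i₁ + (L : ℤ) - (n : ℤ)) (i₁ + (L : ℤ) - 1)

/-- Joint pmf of the pair of starting indices `(I(1), I(2))`. -/
noncomputable def idxWeight (n L : ℕ) (i₁ i₂ : ℤ) : ℝ :=
  if i₁ ∈ Finset.Icc 1 (n : ℤ) ∧ i₂ ∈ window n L i₁ then (((n : ℝ)) ^ 2)⁻¹ else 0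

/-- The (signed) overlap between the two reads. -/
def overlap (L : ℕ) (i₁ i₂ : ℤ) : ℤ :=
  if i₁ ≤ i₂ then max 0 ((L : ℤ) - (i₂ - i₁)) else -(max 0 ((L : ℤ) - (i₁ - i₂)))

/-- Bayesian error probability of the detector `That` in the noiseless setting. -/
noncomputable def errProb (μ : Measure (ℤ → 𝒳)) (n L : ℕ)
    (That : (Fin L → 𝒳) → (Fin L → 𝒳) → ℤ) : ℝ :=
  ∑' p : ℤ × ℤ, idxWeight n L p.1 p.2 *
    (μ {ω | That (fun k => ω (p.1 + ((k : ℕ) : ℤ))) (fun k => ω (p.2 + ((k : ℕ) : ℤ))) ≠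
        overlap L p.1 p.2}).toReal

/-- Minimal Bayesian error probability over all detectors with values in `𝒯`. -/
noncomputable def Pstar (μ : Measure (ℤ → 𝒳)) (β : ℝ) (n : ℕ) : ℝ :=
  sInf {e : ℝ | ∃ That : (Fin (ell β n) → 𝒳) → (Fin (ell β n) → 𝒳) → ℤ,
    (∀ y₁ y₂, That y₁ y₂ ∈ Set.Icc (1 - (ell β n : ℤ)) ((ell β n : ℤ))) ∧
    e = errProb μ n (ell β n) That}

end

theorem sum_mul_ite_le_rpow_mul_sum_rpow {ι : Type*} [Fintype ι] {P : ι → ℝ}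
    (hP : ∀ x, 0 ≤ P x) {δ α : ℝ} (hδ : 0 < δ) (hα : 1 ≤ α) :
    ∑ x, P x * (if δ ≤ P x then 1 else 0) ≤ δ ^ (1 - α) * ∑ x, P x ^ α := by
  rw [Finset.mul_sum]
  refine Finset.sum_le_sum fun x _ => ?_
  split_ifs with h
  · have hPx : 0 < P x := hδ.trans_le h
    calc P x * 1 = P x ^ (1 - α) * P x ^ α := by rw [mul_one, ← rpow_add hPx]; norm_num
      _ ≤ δ ^ (1 - α) * P x ^ α :=
        mul_le_mul_of_nonneg_right (rpow_le_rpow_of_nonpos hδ h (by linarith)) (rpow_nonneg hPx.le _)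
  · rw [mul_zero]
    exact mul_nonneg (rpow_nonneg hδ.le _) (rpow_nonneg (hP x) _)

theorem eventually_mul_le_of_tendsto_div {f : ℕ → ℝ} {L K : ℝ}
    (hf : Tendsto (fun t : ℕ => f t / t) atTop (nhds L)) (hK : K < L) :
    ∀ᶠ t : ℕ in atTop, K * t ≤ f t := by
  filter_upwards [hf.eventually (eventually_gt_nhds hK), eventually_gt_atTop 0] with t ht ht0
  exact ((lt_div_iff₀ (Nat.cast_pos.2 ht0)).1 ht).le

theorem eventually_mul_log_add_le (c d : ℝ) : ∀ᶠ x : ℝ in atTop, c * log x + d ≤ x := by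
  filter_upwards [((isLittleO_log_id_atTop.const_mul_left c).add
    (Asymptotics.isLittleO_const_id_atTop d)).bound one_pos, eventually_ge_atTop 0] with x hx hx0
  rw [one_mul, Real.norm_eq_abs, Real.norm_eq_abs, id_eq, abs_of_nonneg hx0] at hx
  exact (le_abs_self _).trans hx

theorem tendsto_exp_mul_log_sub_mul_log {a γ : ℝ} (ha : 0 < a) (hγ : 1 < γ) :
    Tendsto (fun n : ℕ => exp (a * (log n - γ * log n))) atTop (nhds 0) := by
  refine tendsto_exp_atBot.comp ?_
  have hrate : (fun n : ℕ => a * (log n - γ * log n)) = fun n : ℕ => -(a * (γ - 1)) * log n := by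
    funext n; ring
  rw [hrate]
  exact (tendsto_log_atTop.comp tendsto_natCast_atTop_atTop).const_mul_atTop_of_neg
    (neg_neg_of_pos (mul_pos ha (sub_pos.2 hγ)))

theorem eventually_sub_two_mul_ell_sub_one_mem_Ioc {β : ℝ} (hβ : 0 < β) :
    ∀ᶠ n : ℕ in atTop, (n : ℝ) - (2 * (ell β n : ℝ) - 1) ∈ Set.Ioc 0 (n : ℝ) := by
  filter_upwards [tendsto_natCast_atTop_atTop.eventually (eventually_mul_log_add_le (2 * β) 1),
    eventually_ge_atTop 2] with n hlog hn
  have hell_lt : (ell β n : ℝ) < β * log n + 1 :=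
    Nat.ceil_lt_add_one (mul_nonneg hβ.le (log_natCast_nonneg n))
  have hell_pos : 0 < ell β n :=
    Nat.ceil_pos.2 (mul_pos hβ (log_pos (by exact_mod_cast hn)))
  have hell_one : (1 : ℝ) ≤ ell β n := by exact_mod_cast hell_pos
  constructor <;> linarith

theorem blockPmf_nonneg {𝒳 : Type*} [MeasurableSpace 𝒳] (μ : Measure (ℤ → 𝒳)) (a : ℤ) (t : ℕ)
    (x : Fin t → 𝒳) : 0 ≤ blockPmf μ a t x :=
  ENNReal.toReal_nonneg

theorem sum_blockPmf_rpow_le_exp_renyiH {𝒳 : Type*} [Fintype 𝒳] [MeasurableSpace 𝒳]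
    (μ : Measure (ℤ → 𝒳)) (t : ℕ) {α : ℝ} (hα : α ≠ 1) :
    ∑ x : Fin t → 𝒳, blockPmf μ 1 t x ^ α ≤ exp ((1 - α) * renyiH μ α t) := by
  rw [renyiH, ← mul_assoc, mul_inv_cancel₀ (sub_ne_zero.2 hα.symm), one_mul]
  exact le_exp_log _

theorem sum_large_blockPmf_le_exp {𝒳 : Type*} [Fintype 𝒳] [MeasurableSpace 𝒳]
    (μ : Measure (ℤ → 𝒳)) (t : ℕ) {α m x r : ℝ} (hα : 1 < α) (hm : 0 < m) (hmx : m ≤ x)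
    (hr : r ≤ renyiH μ α t) :
    ∑ y : Fin t → 𝒳, blockPmf μ 1 t y * (if m⁻¹ ≤ blockPmf μ 1 t y then 1 else 0) ≤
      exp ((α - 1) * (log x - r)) := by
  have hm_rpow : m⁻¹ ^ (1 - α) ≤ exp ((α - 1) * log x) := by
    rw [inv_rpow hm.le, ← rpow_neg hm.le, neg_sub, mul_comm, ← rpow_def_of_pos (hm.trans_le hmx)]
    exact rpow_le_rpow hm.le hmx (by linarith)
  calc _ ≤ m⁻¹ ^ (1 - α) * ∑ y : Fin t → 𝒳, blockPmf μ 1 t y ^ α :=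
        sum_mul_ite_le_rpow_mul_sum_rpow (blockPmf_nonneg μ 1 t) (inv_pos.2 hm) hα.le
    _ ≤ exp ((α - 1) * log x) * exp ((1 - α) * r) := by
        refine mul_le_mul hm_rpow ((sum_blockPmf_rpow_le_exp_renyiH μ t hα.ne').trans ?_)
          (Finset.sum_nonneg fun y _ => rpow_nonneg (blockPmf_nonneg μ 1 t y) α) (exp_pos _).le
        exact exp_le_exp.2 (mul_le_mul_of_nonpos_left hr (by linarith))
    _ = exp ((α - 1) * (log x - r)) := by rw [← exp_add]; ring_nf

section

variable {𝒳 : Type*} [Fintype 𝒳] [MeasurableSpace 𝒳] [MeasurableSingletonClass 𝒳]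

theorem partial_probability_sum_bound_general
    (μ : Measure (ℤ → 𝒳))
    (H₁ : ℝ) (hH₁pos : 0 < H₁)
    (Hα : ℝ → ℝ)
    (hHα : ∀ α ∈ Set.Ioc (1 : ℝ) 2,
      Tendsto (fun t : ℕ => renyiH μ α t / t) atTop (nhds (Hα α)))
    (hHαconv : Tendsto Hα (nhdsWithin 1 (Set.Ioi 1)) (nhds H₁))
    (β : ℝ) (hβ : 0 < β)
    (η : ℝ) (hη : 0 < η) :
    Tendsto (fun n : ℕ =>
        sSup {v : ℝ | ∃ t : ℕ, (1 + η) * Real.log n / H₁ < (t : ℝ) ∧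
          v = ∑ x : Fin t → 𝒳, blockPmf μ 1 t x *
            (if ((n : ℝ) - (2 * (ell β n : ℝ) - 1))⁻¹ ≤ blockPmf μ 1 t x then 1 else 0)})
      atTop (nhds 0) := by
  obtain ⟨γ, hγ, hγη⟩ : ∃ γ, 1 < γ ∧ γ < 1 + η := ⟨1 + η / 2, by linarith, by linarith⟩
  -- `K` turns the constraint on `t` into `γ * log n ≤ K * t`, and `K < H₁` leaves room for `α`.
  set K := γ * H₁ / (1 + η) with hK_def
  have hK : K < H₁ := by
    rw [hK_def, div_lt_iff₀ (by positivity), mul_comm H₁]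
    exact mul_lt_mul_of_pos_right hγη hH₁pos
  obtain ⟨α, hKα, hα⟩ : ∃ α, K < Hα α ∧ α ∈ Set.Ioc (1 : ℝ) 2 :=
    ((hHαconv.eventually (eventually_gt_nhds hK)).and
      (Ioo_mem_nhdsGT one_lt_two)).exists.imp fun α h => ⟨h.1, h.2.1, h.2.2.le⟩
  obtain ⟨T, hT⟩ := eventually_atTop.1 (eventually_mul_le_of_tendsto_div (hHα α hα) hKα)
  refine squeeze_zero' (Eventually.of_forall fun n => Real.sSup_nonneg ?_) ?_
    (tendsto_exp_mul_log_sub_mul_log (sub_pos.2 hα.1) hγ)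
  · rintro _ ⟨t, -, rfl⟩
    exact Finset.sum_nonneg fun x _ => mul_nonneg (blockPmf_nonneg μ 1 t x) (by positivity)
  filter_upwards [eventually_sub_two_mul_ell_sub_one_mem_Ioc hβ,
    (((tendsto_log_atTop.comp tendsto_natCast_atTop_atTop).const_mul_atTop
      (by positivity : 0 < 1 + η)).atTop_div_const hH₁pos).eventually_ge_atTop (T : ℝ)]
    with n ⟨hpos, hle⟩ hTn
  refine Real.sSup_le ?_ (exp_pos _).le
  rintro _ ⟨t, ht, rfl⟩
  refine sum_large_blockPmf_le_exp μ t hα.1 hpos hle ?_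
  calc γ * log n = K * ((1 + η) * log n / H₁) := by rw [hK_def]; field_simp
    _ ≤ K * t := by gcongr
    _ ≤ renyiH μ α t := hT t (by exact_mod_cast hTn.trans ht.le)

/-- Uniform bound on sums of large block probabilities
(Lemma: partial probability sum bound). -/
theorem partial_probability_sum_bound
    (μ : Measure (ℤ → 𝒳)) [IsProbabilityMeasure μ]
    (herg : Ergodic (shift (𝒳 := 𝒳)) μ)
    (H₁ : ℝ) (hH₁pos : 0 < H₁)
    (hH₁ : Tendsto (fun t : ℕ => shannonH μ t / t) atTop (nhds H₁))
    (Hα : ℝ → ℝ)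
    (hHα : ∀ α ∈ Set.Ioc (1 : ℝ) 2,
      Tendsto (fun t : ℕ => renyiH μ α t / t) atTop (nhds (Hα α)))
    (hHαconv : Tendsto Hα (nhdsWithin 1 (Set.Ioi 1)) (nhds H₁))
    (β : ℝ) (hβ : 0 < β)
    (η : ℝ) (hη : 0 < η) :
    Tendsto (fun n : ℕ =>
        sSup {v : ℝ | ∃ t : ℕ, (1 + η) * Real.log n / H₁ < (t : ℝ) ∧
          v = ∑ x : Fin t → 𝒳, blockPmf μ 1 t x *
            (if ((n : ℝ) - (2 * (ell β n : ℝ) - 1))⁻¹ ≤ blockPmf μ 1 t x then 1 else 0)})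
      atTop (nhds 0) :=
  partial_probability_sum_bound_general μ H₁ hH₁pos Hα hHα hHαconv β hβ η hη

end
end
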